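/- Let E = ∏_p E_p ⊆ Ẑ be compact and n ≥ 0. The n-th characteristic module I_n(E) of Int_ℚ(E, Ẑ) is a fractional ideal of ℤ (equivalently, a finitely generated ℤ-submodule of ℚ) if and only if (1) #E_p > n for all primes p, and (2) #(E_p mod p) > n for all but finitely many primes p. -/

import Mathlib

open Polynomial

instance (p : Nat.Primes) : Fact (p : ℕ).Prime := ⟨p.2⟩

/-- `Ẑ = ∏_p ℤ_p`, the profinite completion of `ℤ` (product model). -/
abbrev Zhat : Type := ∀ p : Nat.Primes, ℤ_[(p : ℕ)]

/-- `Int_ℚ(E, Ẑ) = {f ∈ ℚ[x] : f(α_p) ∈ ℤ_p for all (α_p)_p ∈ E and all primes p}`. -/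
def IntQ (E : Set Zhat) : Set (Polynomial ℚ) :=
  {f | ∀ α ∈ E, ∀ p : Nat.Primes, ‖(Polynomial.aeval ((α p : ℚ_[(p : ℕ)]))) f‖ ≤ 1}

/-- `Int_ℚ(E_p, ℤ_p) = {f ∈ ℚ[x] : f(E_p) ⊆ ℤ_p}`. -/
def IntQp (p : Nat.Primes) (S : Set ℤ_[(p : ℕ)]) : Set (Polynomial ℚ) :=
  {f | ∀ x ∈ S, ‖(Polynomial.aeval ((x : ℚ_[(p : ℕ)]))) f‖ ≤ 1}
/-- The `n`-th characteristic `ℤ`-module of `Int_ℚ(E, Ẑ)`: leading coefficients of its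
elements of degree `≤ n` (with `lc 0 = 0` by convention). -/
def In (E : Set Zhat) (n : ℕ) : Set ℚ :=
  {c | ∃ f ∈ IntQ E, f.degree ≤ (n : ℕ) ∧ f.leadingCoeff = c}

/-- The `n`-th characteristic module of `Int_ℚ(E_p, ℤ_p)`. -/
def Inp (p : Nat.Primes) (S : Set ℤ_[(p : ℕ)]) (n : ℕ) : Set ℚ :=
  {c | ∃ f ∈ IntQp p S, f.degree ≤ (n : ℕ) ∧ f.leadingCoeff = c}

/-! Lagrange interpolation at `n + 1` distinct points `x_i ∈ E_p` writes the leading coefficient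
of `f` of degree `≤ n` as `∑ f(x_i) / ∏_{j ≠ i} (x_i - x_j)`, so for `f ∈ Int_ℚ(E, Ẑ)` it has
`p`-adic norm at most `‖∏_{i ≠ j} (x_i - x_j)‖⁻¹`, which is `1` when the `x_i` are distinct
mod `p`. Under (1) and (2) this bounds `I_n(E)` at every prime, and by `1` at almost every prime,
so `d I_n(E) ⊆ ℤ` for some `d ≠ 0`.

Conversely, if `E_p` is covered by at most `n` classes `a + p^N ℤ_p`, then
`p^{-N} ∏_a (x - a) x^{n - #a}` lies in `Int_ℚ(E, Ẑ)`, since `p` is a unit at every other prime.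
So `#E_p ≤ n` puts every `p^{-N}` in `I_n(E)`, forcing `p^N ∣ d` for all `N`, and
`#(E_p mod p) ≤ n` puts `p⁻¹` in `I_n(E)`, forcing `p ∣ d`. -/

open Finset
open scoped nonZeroDivisors

section FractionalIdeal

variable {R K : Type*} [CommRing R] [IsDomain R] [IsNoetherianRing R] [Field K] [Algebra R K]
  [IsFractionRing R K]

theorem Submodule.fg_span_iff_exists_isInteger_smul {s : Set K} :
    (Submodule.span R s).FG ↔ ∃ a ∈ R⁰, ∀ b ∈ s, IsLocalization.IsInteger R (a • b) := by
  rw [← FractionalIdeal.isFractional_span_iff]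
  exact ⟨FractionalIdeal.isFractional_of_fg,
    fun h => FractionalIdeal.fg_of_isNoetherianRing le_rfl ⟨_, h⟩⟩

end FractionalIdeal

theorem Rat.isInteger_of_forall_norm_padic_le_one {x : ℚ}
    (h : ∀ p : Nat.Primes, ‖(x : ℚ_[(p : ℕ)])‖ ≤ 1) : IsLocalization.IsInteger ℤ x := by
  suffices hden : x.den = 1 from ⟨x.num, by simpa using Rat.coe_int_num_of_den_eq_one hden⟩
  by_contra hden
  have := Fact.mk (Nat.minFac_prime hden)
  have hunit := PadicInt.isUnit_iff.mp (PadicInt.isUnit_den x (h ⟨_, this.out⟩))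
  exact (PadicInt.norm_natCast_lt_one_iff.mpr (Nat.minFac_dvd x.den)).ne hunit

theorem Int.dvd_of_isInteger_smul_inv {a b : ℤ} (hb : b ≠ 0)
    (h : IsLocalization.IsInteger ℤ (a • (b : ℚ)⁻¹)) : b ∣ a := by
  obtain ⟨m, hm⟩ := h
  refine ⟨m, ?_⟩
  have hb' : (b : ℚ) ≠ 0 := by exact_mod_cast hb
  rw [algebraMap_int_eq, eq_intCast, zsmul_eq_mul, eq_mul_inv_iff_mul_eq₀ hb'] at hm
  exact_mod_cast (mul_comm (b : ℚ) m ▸ hm).symm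

theorem Nat.Primes.finite_setOf_dvd {m : ℕ} (hm : m ≠ 0) : {p : Nat.Primes | (p : ℕ) ∣ m}.Finite :=
  ((Set.finite_Iic m).preimage Subtype.val_injective.injOn).subset
    fun _ hp => Nat.le_of_dvd (Nat.pos_of_ne_zero hm) hp

theorem fg_span_of_forall_norm_padic_le (A : Set ℚ) (C : Nat.Primes → ℝ)
    (hC : ∀ p : Nat.Primes, ∀ a ∈ A, ‖(a : ℚ_[(p : ℕ)])‖ ≤ C p)
    (hB : {p : Nat.Primes | ∃ a ∈ A, 1 < ‖(a : ℚ_[(p : ℕ)])‖}.Finite) :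
    (Submodule.span ℤ A).FG := by
  choose k hk using fun p : Nat.Primes =>
    pow_unbounded_of_one_lt (C p) (by exact_mod_cast p.2.one_lt : (1 : ℝ) < (p : ℕ))
  set d : ℕ := ∏ p ∈ hB.toFinset, (p : ℕ) ^ k p
  have hd : d ≠ 0 := prod_ne_zero_iff.mpr fun p _ => pow_ne_zero _ p.2.ne_zero
  refine Submodule.fg_span_iff_exists_isInteger_smul.mpr ⟨d, mem_nonZeroDivisors_of_ne_zero
    (by exact_mod_cast hd), fun a ha => Rat.isInteger_of_forall_norm_padic_le_one fun q => ?_⟩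
  rw [zsmul_eq_mul, Rat.cast_mul, norm_mul, Int.cast_natCast, Rat.cast_natCast]
  by_cases hq : q ∈ hB.toFinset
  · have hqd : ‖(d : ℚ_[(q : ℕ)])‖ ≤ ((q : ℕ) : ℝ) ^ (-(k q : ℤ)) := by
      rw [← Int.cast_natCast, Padic.norm_int_le_pow_iff_dvd]
      exact_mod_cast dvd_prod_of_mem (fun p : Nat.Primes => (p : ℕ) ^ k p) hq
    calc ‖(d : ℚ_[(q : ℕ)])‖ * ‖(a : ℚ_[(q : ℕ)])‖
        ≤ ((q : ℕ) : ℝ) ^ (-(k q : ℤ)) * ((q : ℕ) : ℝ) ^ k q :=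
          mul_le_mul hqd ((hC q a ha).trans (hk q).le) (norm_nonneg _) (by positivity)
      _ = 1 := by
        rw [zpow_neg, zpow_natCast, inv_mul_cancel₀ (pow_ne_zero _ (by exact_mod_cast q.2.ne_zero))]
  · have ha1 : ‖(a : ℚ_[(q : ℕ)])‖ ≤ 1 := by
      simp only [Set.Finite.mem_toFinset, Set.mem_ofPred_eq, not_exists, not_and, not_lt] at hq
      exact hq a ha
    exact mul_le_one₀ (IsUltrametricDist.norm_natCast_le_one _ d) (norm_nonneg _) ha1

theorem exists_ne_zero_forall_dvd_of_fg_span {A : Set ℚ} (h : (Submodule.span ℤ A).FG) :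
    ∃ d : ℤ, d ≠ 0 ∧ ∀ b : ℤ, b ≠ 0 → (b : ℚ)⁻¹ ∈ A → b ∣ d := by
  obtain ⟨d, hd, hdA⟩ := Submodule.fg_span_iff_exists_isInteger_smul.mp h
  exact ⟨d, nonZeroDivisors.ne_zero hd,
    fun b hb hbA => Int.dvd_of_isInteger_smul_inv hb (hdA _ hbA)⟩

theorem Set.exists_finset_subset_card_eq {α : Type*} {S : Set α} {k : ℕ}
    (h : ∀ _ : S.Finite, k ≤ S.ncard) : ∃ t : Finset α, ↑t ⊆ S ∧ #t = k := by
  by_cases hS : S.Finite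
  · obtain ⟨t, hts, ht⟩ := Finset.exists_subset_card_eq (Set.ncard_eq_toFinset_card S hS ▸ h hS)
    exact ⟨t, hS.subset_toFinset.mp hts, ht⟩
  · exact Set.Infinite.exists_subset_card_eq hS k

theorem Set.exists_finset_subset_injOn_card_eq {α β : Type*} {S : Set α} (f : α → β) {k : ℕ}
    (h : ∀ _ : (f '' S).Finite, k ≤ (f '' S).ncard) :
    ∃ t : Finset α, ↑t ⊆ S ∧ Set.InjOn f t ∧ #t = k := by
  obtain ⟨u, huS, hu⟩ := Set.exists_subset_bijOn S f
  obtain ⟨t, htu, ht⟩ := Set.exists_finset_subset_card_eq (S := u) (k := k) fun hfin => by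
    rw [← hu.injOn.ncard_image, hu.image_eq]
    exact h (hu.image_eq ▸ hfin.image f)
  exact ⟨t, htu.trans huS, hu.injOn.mono htu, ht⟩

namespace PadicInt

variable {p : ℕ} [Fact p.Prime]

@[simp, norm_cast]
theorem coe_prod {ι : Type*} (s : Finset ι) (f : ι → ℤ_[p]) :
    ((∏ i ∈ s, f i : ℤ_[p]) : ℚ_[p]) = ∏ i ∈ s, (f i : ℚ_[p]) :=
  map_prod Coe.ringHom f s

theorem norm_le_of_dvd {a b : ℤ_[p]} (h : a ∣ b) : ‖b‖ ≤ ‖a‖ := by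
  obtain ⟨c, rfl⟩ := h
  rw [norm_mul]
  exact mul_le_of_le_one_right (norm_nonneg a) c.norm_le_one

theorem norm_eq_one_iff_toZMod_ne_zero {z : ℤ_[p]} : ‖z‖ = 1 ↔ toZMod z ≠ 0 := by
  rw [← isUnit_iff, ne_eq, ← RingHom.mem_ker, ker_toZMod, IsLocalRing.mem_maximalIdeal,
    mem_nonunits_iff, not_not]

theorem dvd_sub_val_toZMod (x : ℤ_[p]) : (p : ℤ_[p]) ∣ x - (toZMod x).val := by
  rw [← Ideal.mem_span_singleton, ← maximalIdeal_eq_span_p, ← ker_toZMod, RingHom.mem_ker,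
    map_sub, map_natCast, ZMod.natCast_zmod_val, sub_self]

open scoped Classical in
theorem norm_prod_prod_sub_eq_one {t : Finset ℤ_[p]} (ht : Set.InjOn toZMod (t : Set ℤ_[p])) :
    ‖∏ x ∈ t, ∏ y ∈ t.erase x, (x - y)‖ = 1 := by
  simp_rw [norm_prod]
  refine prod_eq_one fun x hx => prod_eq_one fun y hy => ?_
  rw [norm_eq_one_iff_toZMod_ne_zero, map_sub, sub_ne_zero]
  exact fun h => ne_of_mem_erase hy (ht (mem_of_mem_erase hy) hx h.symm)

theorem norm_ratCast_inv_pow_mul_le_one {N : ℕ} {w : ℤ_[p]}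
    (hw : (p : ℤ_[p]) ^ N ∣ w) : ‖((((p : ℚ) ^ N)⁻¹ : ℚ) : ℚ_[p]) * w‖ ≤ 1 := by
  obtain ⟨c, rfl⟩ := hw
  have hp : (p : ℚ_[p]) ^ N ≠ 0 := pow_ne_zero _ (by exact_mod_cast (Fact.out : p.Prime).ne_zero)
  push_cast
  rw [inv_mul_cancel_left₀ hp, ← norm_def]
  exact c.norm_le_one

open scoped Classical in
theorem norm_leadingCoeff_le_inv_norm_prod_sub (f : ℚ[X]) (t : Finset ℤ_[p])
    (ht : f.natDegree < #t) (hf : ∀ x ∈ t, ‖aeval (x : ℚ_[p]) f‖ ≤ 1) :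
    ‖(f.leadingCoeff : ℚ_[p])‖ ≤ ‖∏ x ∈ t, ∏ y ∈ t.erase x, (x - y)‖⁻¹ := by
  rcases eq_or_ne f 0 with rfl | hf0
  · rw [leadingCoeff_zero, Rat.cast_zero, norm_zero]
    positivity
  obtain ⟨s, hst, hs⟩ := exists_subset_card_eq ht
  have hΔ : ∏ x ∈ t, ∏ y ∈ t.erase x, (x - y) ≠ 0 := prod_ne_zero_iff.mpr fun x _ =>
    prod_ne_zero_iff.mpr fun y hy => sub_ne_zero.mpr (ne_of_mem_erase hy).symm
  have hdeg : (#s : WithBot ℕ) = (f.map (algebraMap ℚ ℚ_[p])).degree + 1 := by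
    rw [degree_map, degree_eq_natDegree hf0, hs]
    norm_cast
  rw [← eq_ratCast (algebraMap ℚ ℚ_[p]), ← leadingCoeff_map,
    Lagrange.leadingCoeff_eq_sum (s := s) (v := ((↑) : ℤ_[p] → ℚ_[p]))
      Subtype.val_injective.injOn hdeg]
  refine IsUltrametricDist.norm_sum_le_of_forall_le_of_nonneg (by positivity) fun x hx => ?_
  have hdvd : ∏ y ∈ s.erase x, (x - y : ℤ_[p]) ∣ ∏ x ∈ t, ∏ y ∈ t.erase x, (x - y) :=
    (prod_dvd_prod_of_subset _ _ _ (erase_subset_erase x hst)).trans (dvd_prod_of_mem _ (hst hx))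
  rw [norm_div, eval_map_algebraMap, ← one_div]
  simp only [← coe_sub, ← coe_prod, ← norm_def]
  exact div_le_div₀ zero_le_one (hf x (hst hx)) (norm_pos_iff.mpr hΔ) (norm_le_of_dvd hdvd)

end PadicInt

theorem Padic.norm_ratCast_inv_prime_pow {p q : ℕ} [Fact p.Prime] (hq : q.Prime) (hpq : p ≠ q)
    (N : ℕ) : ‖((((q : ℚ) ^ N)⁻¹ : ℚ) : ℚ_[p])‖ = 1 := by
  push_cast
  rw [norm_inv, norm_pow, Padic.norm_natCast_eq_one_iff.mpr
    ((Nat.coprime_primes Fact.out hq).mpr hpq), one_pow, inv_one]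

open scoped Classical in
theorem norm_le_of_mem_Inp {p : Nat.Primes} {S : Set ℤ_[(p : ℕ)]} {n : ℕ} {t : Finset ℤ_[(p : ℕ)]}
    (htS : ↑t ⊆ S) (hnt : n < #t) {c : ℚ} (hc : c ∈ Inp p S n) :
    ‖(c : ℚ_[(p : ℕ)])‖ ≤ ‖∏ x ∈ t, ∏ y ∈ t.erase x, (x - y)‖⁻¹ := by
  obtain ⟨f, hf, hdeg, rfl⟩ := hc
  exact PadicInt.norm_leadingCoeff_le_inv_norm_prod_sub f t
    ((natDegree_le_of_degree_le hdeg).trans_lt hnt) fun x hx => hf x (htS hx)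

theorem norm_le_one_of_mem_Inp {p : Nat.Primes} {S : Set ℤ_[(p : ℕ)]} {n : ℕ}
    (hS : n < (PadicInt.toZMod '' S).ncard) {c : ℚ} (hc : c ∈ Inp p S n) :
    ‖(c : ℚ_[(p : ℕ)])‖ ≤ 1 := by
  obtain ⟨t, htS, hinj, ht⟩ := Set.exists_finset_subset_injOn_card_eq PadicInt.toZMod fun _ => hS
  simpa [PadicInt.norm_prod_prod_sub_eq_one hinj] using
    norm_le_of_mem_Inp htS (ht ▸ n.lt_succ_self) hc

theorem In_pi_subset_Inp {Ep : ∀ p : Nat.Primes, Set ℤ_[(p : ℕ)]} (hE : (Set.univ.pi Ep).Nonempty)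
    (p : Nat.Primes) (n : ℕ) : In (Set.univ.pi Ep) n ⊆ Inp p (Ep p) n := by
  classical
  obtain ⟨a, ha⟩ := hE
  rintro c ⟨f, hf, hdeg, rfl⟩
  refine ⟨f, fun x hx => ?_, hdeg, rfl⟩
  simpa using hf _ ((Set.update_mem_pi_iff_of_mem ha).mpr fun _ => hx) p

theorem inv_pow_mem_In {E : Set Zhat} {n : ℕ} (p : Nat.Primes) (N : ℕ) (t : Finset ℕ)
    (ht : #t ≤ n) (hcover : ∀ α ∈ E, ∃ a ∈ t, ((p : ℕ) : ℤ_[(p : ℕ)]) ^ N ∣ α p - a) :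
    (((p : ℕ) : ℚ) ^ N)⁻¹ ∈ In E n := by
  set g : ℚ[X] := (∏ a ∈ t, (X - C (a : ℚ))) * X ^ (n - #t)
  have hprod : (∏ a ∈ t, (X - C (a : ℚ))).Monic :=
    monic_prod_of_monic _ _ fun a _ => monic_X_sub_C _
  have hg : g.Monic := hprod.mul (monic_X_pow _)
  have hgdeg : g.natDegree = n := by
    rw [hprod.natDegree_mul (monic_X_pow _), natDegree_X_pow,
      natDegree_prod_of_monic _ _ fun a _ => monic_X_sub_C _]
    simp only [natDegree_X_sub_C, sum_const, smul_eq_mul, mul_one]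
    omega
  have hu : (((p : ℕ) : ℚ) ^ N)⁻¹ ≠ 0 := inv_ne_zero (pow_ne_zero _ (by exact_mod_cast p.2.ne_zero))
  refine ⟨C (((p : ℕ) : ℚ) ^ N)⁻¹ * g, fun α hα q => ?_, ?_, ?_⟩
  · set w : ℤ_[(q : ℕ)] := (∏ a ∈ t, (α q - a)) * α q ^ (n - #t)
    have hval : aeval (α q : ℚ_[(q : ℕ)]) (C (((p : ℕ) : ℚ) ^ N)⁻¹ * g)
        = (((((p : ℕ) : ℚ) ^ N)⁻¹ : ℚ) : ℚ_[(q : ℕ)]) * w := by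
      simp [g, w]
    rw [hval]
    by_cases hqp : q = p
    · subst hqp
      obtain ⟨a, ha, hdvd⟩ := hcover α hα
      exact PadicInt.norm_ratCast_inv_pow_mul_le_one
        (hdvd.trans ((dvd_prod_of_mem _ ha).mul_right _))
    · rw [norm_mul, Padic.norm_ratCast_inv_prime_pow p.2 (fun h => hqp (Subtype.ext h)), one_mul,
        ← PadicInt.norm_def]
      exact w.norm_le_one
  · rw [degree_C_mul hu]
    exact degree_le_of_natDegree_le hgdeg.le
  · rw [leadingCoeff_mul, leadingCoeff_C, hg.leadingCoeff, mul_one]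

theorem inv_pow_mem_In_of_ncard_le {Ep : ∀ p : Nat.Primes, Set ℤ_[(p : ℕ)]} {n : ℕ}
    (p : Nat.Primes) (hfin : (Ep p).Finite) (hcard : (Ep p).ncard ≤ n) (N : ℕ) :
    (((p : ℕ) : ℚ) ^ N)⁻¹ ∈ In (Set.univ.pi Ep) n := by
  classical
  refine inv_pow_mem_In p N (hfin.toFinset.image (PadicInt.appr · N)) ?_ fun α hα => ?_
  · exact card_image_le.trans (Set.ncard_eq_toFinset_card _ hfin ▸ hcard)
  · exact ⟨(α p).appr N, mem_image_of_mem _ (hfin.mem_toFinset.mpr (hα p trivial)),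
      Ideal.mem_span_singleton.mp (PadicInt.appr_spec N _)⟩

theorem inv_mem_In_of_ncard_toZMod_le {Ep : ∀ p : Nat.Primes, Set ℤ_[(p : ℕ)]} {n : ℕ}
    (p : Nat.Primes) (hcard : (PadicInt.toZMod '' Ep p).ncard ≤ n) :
    ((p : ℕ) : ℚ)⁻¹ ∈ In (Set.univ.pi Ep) n := by
  classical
  have hfin : (PadicInt.toZMod '' Ep p).Finite := Set.toFinite _
  simpa using inv_pow_mem_In (E := Set.univ.pi Ep) p 1 (hfin.toFinset.image ZMod.val)
    (card_image_le.trans (Set.ncard_eq_toFinset_card _ hfin ▸ hcard)) fun α hα =>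
      ⟨_, mem_image_of_mem _ (hfin.mem_toFinset.mpr ⟨_, hα p trivial, rfl⟩),
        by simpa using PadicInt.dvd_sub_val_toZMod (α p)⟩

theorem In_fg_iff_general (Ep : ∀ p : Nat.Primes, Set ℤ_[(p : ℕ)]) (n : ℕ) :
    (Submodule.span ℤ (In (Set.univ.pi Ep) n)).FG
      ↔ ((∀ p : Nat.Primes, ∀ h : (Ep p).Finite, n < (Ep p).ncard)
          ∧ {p : Nat.Primes | ¬ n < (PadicInt.toZMod '' Ep p).ncard}.Finite) := by
  constructor
  · intro hfg
    obtain ⟨d, hd0, hd⟩ := exists_ne_zero_forall_dvd_of_fg_span hfg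
    have hpow (p : Nat.Primes) (N : ℕ) (h : (((p : ℕ) : ℚ) ^ N)⁻¹ ∈ In (Set.univ.pi Ep) n) :
        ((p : ℕ) : ℤ) ^ N ∣ d :=
      hd _ (pow_ne_zero _ (by exact_mod_cast p.2.ne_zero)) (by exact_mod_cast h)
    refine ⟨fun p hfin => ?_, ?_⟩
    · by_contra! hcard
      refine hd0 (Int.eq_zero_of_dvd_of_natAbs_lt_natAbs
        (hpow p _ (inv_pow_mem_In_of_ncard_le p hfin hcard d.natAbs)) ?_)
      simpa using Nat.lt_pow_self p.2.one_lt
    · refine (Nat.Primes.finite_setOf_dvd (Int.natAbs_ne_zero.mpr hd0)).subset fun p hp => ?_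
      have := hpow p 1 (by simpa using inv_mem_In_of_ncard_toZMod_le p (not_lt.mp hp))
      exact Int.natCast_dvd.mp (by simpa using this)
  · rintro ⟨hcard, hres⟩
    choose t htS ht using fun p => Set.exists_finset_subset_card_eq (hcard p)
    have hE : (Set.univ.pi Ep).Nonempty := Set.univ_pi_nonempty_iff.mpr fun p =>
      (coe_nonempty.mpr (card_pos.mp (ht p ▸ n.succ_pos))).mono (htS p)
    refine fg_span_of_forall_norm_padic_le _ _
      (fun p c hc => norm_le_of_mem_Inp (htS p) (ht p ▸ n.lt_succ_self)
        (In_pi_subset_Inp hE p n hc)) (hres.subset fun p ⟨c, hc, hc1⟩ hp =>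
        (norm_le_one_of_mem_Inp hp (In_pi_subset_Inp hE p n hc)).not_gt hc1)

/-- For compact `E = ∏_p E_p ⊆ Ẑ` and `n ≥ 0`, the characteristic module
`I_n(E)` is a fractional ideal of `ℤ` (equivalently, a finitely generated `ℤ`-submodule of
`ℚ`) iff (1) `#E_p > n` for all `p` and (2) `#(E_p mod p) > n` for all but finitely many
`p`. -/
theorem In_fg_iff (Ep : ∀ p : Nat.Primes, Set ℤ_[(p : ℕ)])
    (hcpt : IsCompact (Set.univ.pi Ep)) (n : ℕ) :
    (Submodule.span ℤ (In (Set.univ.pi Ep) n)).FG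
      ↔ ((∀ p : Nat.Primes, ∀ h : (Ep p).Finite, n < (Ep p).ncard)
          ∧ {p : Nat.Primes | ¬ n < (PadicInt.toZMod '' Ep p).ncard}.Finite) :=
  In_fg_iff_general Ep n
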